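/- arXiv:2605.03200 — 2 statements merged into one kernel-verified Lean document; each statement's English description precedes it below -/
import Mathlib

section
/- For integers N ≥ 1 and k ≥ 1, F_{Nk}/F_k = ∑_{j=0}^{⌊(N-1)/2⌋} (-1)^((k-1)·j) · C(N-1-j, j) · L_k^(N-1-2j). -/
/-!
Write `L = L_k`. Binet's formula gives `F_{a+2k} = L F_{a+k} - (-1)^k F_a`, so `N ↦ F_{Nk}`
obeys `u_{N+2} = L u_{N+1} + (-1)^(k-1) u_N`. By Pascal's rule the sum
`s_n = ∑_j c^j C(n-j, j) x^(n-2j)` obeys `s_{n+2} = x s_{n+1} + c s_n` with `s_0 = 1`, `s_1 = x`,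
so for `x = L`, `c = (-1)^(k-1)` the two sequences agree up to the factor `F_k`.
-/

/-- The Lucas numbers: `L_0 = 2`, `L_1 = 1`, `L_{n+2} = L_{n+1} + L_n`
(so `L_1 = 1`, `L_2 = 3`). -/
def lucas : ℕ → ℕ
  | 0 => 2
  | 1 => 1
  | n + 2 => lucas (n + 1) + lucas n

open Finset Real goldenRatio

section FibSum

variable {R : Type*} [CommSemiring R] (x c : R)

def fibSum (n : ℕ) : R :=
  ∑ j ∈ range (n / 2 + 1), c ^ j * ((n - j).choose j : R) * x ^ (n - 2 * j)

lemma fibSum_eq_sum_range {n m : ℕ} (hm : n / 2 < m) :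
    fibSum x c n = ∑ j ∈ range m, c ^ j * ((n - j).choose j : R) * x ^ (n - 2 * j) := by
  refine sum_subset (fun j hj => ?_) (fun j _ hj => ?_)
  · simp only [mem_range] at hj ⊢
    omega
  · simp only [mem_range] at hj
    rw [Nat.choose_eq_zero_of_lt (by omega), Nat.cast_zero, mul_zero, zero_mul]

lemma fibSum_zero : fibSum x c 0 = 1 := by
  simp [fibSum]

lemma fibSum_one : fibSum x c 1 = x := by
  simp [fibSum]

lemma fibSum_term_succ_succ (n i : ℕ) :
    c ^ (i + 1) * ((n + 2 - (i + 1)).choose (i + 1) : R) * x ^ (n + 2 - 2 * (i + 1)) =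
      x * (c ^ (i + 1) * ((n + 1 - (i + 1)).choose (i + 1) : R) * x ^ (n + 1 - 2 * (i + 1))) +
        c * (c ^ i * ((n - i).choose i : R) * x ^ (n - 2 * i)) := by
  have hpascal :
      (n + 2 - (i + 1)).choose (i + 1) = (n - i).choose i + (n + 1 - (i + 1)).choose (i + 1) := by
    rcases le_or_gt i n with hi | hi
    · rw [show n + 2 - (i + 1) = n - i + 1 by omega, show n + 1 - (i + 1) = n - i by omega,
        Nat.choose_succ_succ']
    · simp [show n + 2 - (i + 1) = 0 by omega, show n + 1 - (i + 1) = 0 by omega,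
        show n - i = 0 by omega, Nat.choose_eq_zero_of_lt (show 0 < i by omega)]
  rw [hpascal, show n + 2 - 2 * (i + 1) = n - 2 * i by omega]
  push_cast
  rcases lt_or_ge n (2 * i + 1) with hn | hn
  · rw [Nat.choose_eq_zero_of_lt (show n - i < i + 1 by omega), Nat.cast_zero]
    ring
  · rw [show n - 2 * i = n + 1 - 2 * (i + 1) + 1 by omega]
    ring

lemma fibSum_add_two (n : ℕ) :
    fibSum x c (n + 2) = x * fibSum x c (n + 1) + c * fibSum x c n := by
  rw [fibSum_eq_sum_range x c (m := n + 3) (by omega),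
    fibSum_eq_sum_range x c (m := n + 3) (by omega),
    fibSum_eq_sum_range x c (m := n + 2) (by omega), sum_range_succ', sum_range_succ' _ (n + 2),
    sum_congr rfl fun i _ => fibSum_term_succ_succ x c n i, sum_add_distrib, mul_add, mul_sum,
    mul_sum]
  simp only [Nat.reduceSubDiff, pow_zero, tsub_zero, Nat.choose_zero_right, Nat.cast_one, mul_one,
    mul_zero, one_mul]
  ring

lemma eq_mul_fibSum {u : ℕ → R} (h1 : u 1 = x * u 0)
    (hrec : ∀ n, u (n + 2) = x * u (n + 1) + c * u n) (n : ℕ) :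
    u n = u 0 * fibSum x c n := by
  induction n using Nat.twoStepInduction with
  | zero => rw [fibSum_zero, mul_one]
  | one => rw [fibSum_one, h1, mul_comm]
  | more n ih0 ih1 => rw [hrec, ih0, ih1, fibSum_add_two]; ring

end FibSum

lemma coe_lucas_eq (n : ℕ) : (lucas n : ℝ) = φ ^ n + ψ ^ n := by
  induction n using Nat.twoStepInduction with
  | zero => norm_num [lucas]
  | one => simp [lucas, goldenRatio_add_goldenConj]
  | more n ih0 ih1 =>
    rw [lucas, Nat.cast_add, ih0, ih1]
    have hφ := goldenRatio_sq
    have hψ := goldenConj_sq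
    -- otherwise `ring` unfolds `φ` and `ψ` into expressions in `√5`
    generalize φ = p at hφ ⊢
    generalize ψ = q at hψ ⊢
    linear_combination -p ^ n * hφ - q ^ n * hψ

lemma lucas_mul_fib_add (a k : ℕ) :
    (lucas k : ℤ) * Nat.fib (a + k) = Nat.fib (a + 2 * k) + (-1) ^ k * Nat.fib a := by
  suffices (lucas k : ℝ) * Nat.fib (a + k) = Nat.fib (a + 2 * k) + (-1) ^ k * Nat.fib a by
    exact_mod_cast this
  rw [coe_lucas_eq, coe_fib_eq, coe_fib_eq, coe_fib_eq, ← goldenRatio_mul_goldenConj]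
  generalize φ = p
  generalize ψ = q
  ring

lemma coe_fib_succ_mul {R : Type*} [CommRing R] (k n : ℕ) :
    (Nat.fib ((n + 1) * k) : R) = Nat.fib k * fibSum (lucas k : R) (-(-1) ^ k) n := by
  have hstep (a : ℕ) :
      (lucas k : R) * Nat.fib (a + k) = Nat.fib (a + 2 * k) + (-1) ^ k * Nat.fib a := by
    exact_mod_cast congrArg (Int.cast : ℤ → R) (lucas_mul_fib_add a k)
  have hinit : (Nat.fib ((1 + 1) * k) : R) = lucas k * Nat.fib ((0 + 1) * k) := by
    simpa [two_mul, add_mul] using (hstep 0).symm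
  have hrec (m : ℕ) : (Nat.fib ((m + 2 + 1) * k) : R) =
      lucas k * Nat.fib ((m + 1 + 1) * k) + -(-1) ^ k * Nat.fib ((m + 1) * k) := by
    have h := hstep ((m + 1) * k)
    rw [show (m + 1) * k + 2 * k = (m + 2 + 1) * k by ring,
      show (m + 1) * k + k = (m + 1 + 1) * k by ring] at h
    linear_combination -h
  have h := eq_mul_fibSum (lucas k : R) (-(-1) ^ k) (u := fun m => (Nat.fib ((m + 1) * k) : R))
    hinit hrec n
  rwa [zero_add, one_mul] at h

theorem stmt11 (N k : ℕ) (hN : 1 ≤ N) (hk : 1 ≤ k) :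
    (Nat.fib (N * k) : ℚ) / (Nat.fib k : ℚ) =
      ∑ j ∈ Finset.range ((N - 1) / 2 + 1),
        (-1 : ℚ) ^ ((k - 1) * j) * ((N - 1 - j).choose j : ℚ) *
          (lucas k : ℚ) ^ (N - 1 - 2 * j) := by
  obtain ⟨n, rfl⟩ : ∃ n, N = n + 1 := ⟨N - 1, by omega⟩
  obtain ⟨t, rfl⟩ : ∃ t, k = t + 1 := ⟨k - 1, by omega⟩
  have hfib : (Nat.fib (t + 1) : ℚ) ≠ 0 := Nat.cast_ne_zero.mpr (Nat.fib_pos.mpr t.succ_pos).ne'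
  rw [coe_fib_succ_mul, mul_div_cancel_left₀ _ hfib, fibSum, pow_succ, mul_neg_one, neg_neg]
  simp only [Nat.add_sub_cancel, pow_mul]
end

section
/- For all integers N ≥ 1 and s ≥ 0 and all nonzero complex z, the identity (1/(2^s s!)) · U_{N+s-1}^{(s)}((z^{1/2} + z^{-1/2})/2) = z^{-(N-1)/2} · ∑_{j=0}^{N-1} C(N+s-1-j, s) · C(s+j, j) · z^j holds, where z^{1/2} denotes a fixed square root of z. -/
/-!
Both sides satisfy the same three-term recurrence in `N`. Differentiating
`U (n + 2) = 2 X U (n + 1) - U n` `s` times gives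
`U⁽ˢ⁾ (n + 2) = 2 X U⁽ˢ⁾ (n + 1) + 2 s U⁽ˢ⁻¹⁾ (n + 1) - U⁽ˢ⁾ n`,
and at `x = (w + w⁻¹) / 2` we have
`2 x w = w ^ 2 + 1`, so `E N s = w ^ N U⁽ˢ⁾ (N + s - 1) (x)` satisfies
`E (N + 2) s = (w ^ 2 + 1) E (N + 1) s + 2 s E (N + 2) (s - 1) - w ^ 2 E N s`.
The binomial sum `B N s` is the coefficient of `T ^ (N - 1)` in `((1 - T) (1 - z T)) ^ (-(s + 1))`;
multiplying by `(1 - T) (1 - z T)` shows that `2 ^ s s! w B N s` satisfies the same recurrence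
when `z = w ^ 2`, with the same initial values at `N = 0, 1`.
-/

open Polynomial Finset
open scoped Nat

section BinomialConvolution

variable {R : Type*} [CommRing R]

/-- The coefficient of `T ^ (N - 1)` in `(1 - T) ^ (-(s + 1)) * (1 - z T) ^ (-(t + 1))`. -/
def binomialConvolution (z : R) (N s t : ℕ) : R :=
  ∑ j ∈ range N, ((N - 1 - j + s).choose s : R) * ((j + t).choose t : R) * z ^ j

theorem binomialConvolution_succ_sub (z : R) (N s t : ℕ) :
    binomialConvolution z (N + 1) (s + 1) t - binomialConvolution z N (s + 1) t =
      binomialConvolution z (N + 1) s t := by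
  simp only [binomialConvolution, sum_range_succ, Nat.add_sub_cancel, Nat.sub_self, zero_add,
    Nat.choose_self]
  rw [add_sub_right_comm, ← sum_sub_distrib]
  congr 1
  refine sum_congr rfl fun j hj => ?_
  obtain ⟨k, rfl⟩ : ∃ k, N = j + 1 + k := ⟨N - (j + 1), by have := mem_range.mp hj; omega⟩
  rw [show j + 1 + k - j = k + 1 by omega, show j + 1 + k - 1 - j = k by omega,
    show k + 1 + (s + 1) = k + 1 + s + 1 by ring, show k + (s + 1) = k + 1 + s by ring,
    Nat.choose_succ_succ', Nat.cast_add]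
  ring

theorem binomialConvolution_succ_sub_mul (z : R) (N s t : ℕ) :
    binomialConvolution z (N + 1) s (t + 1) - z * binomialConvolution z N s (t + 1) =
      binomialConvolution z (N + 1) s t := by
  simp only [binomialConvolution, sum_range_succ', Nat.add_sub_cancel, mul_sum]
  rw [sub_eq_iff_eq_add, add_right_comm, ← sum_add_distrib]
  congr 1
  · refine sum_congr rfl fun j _ => ?_
    rw [Nat.sub_sub N 1 j, Nat.add_comm 1 j, show j + 1 + (t + 1) = j + t + 1 + 1 by ring,
      show j + 1 + t = j + t + 1 by ring, ← add_assoc j t 1, Nat.choose_succ_succ', Nat.cast_add]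
    ring
  · simp

theorem binomialConvolution_add_two_zero (z : R) (m : ℕ) :
    binomialConvolution z (m + 2) 0 0 =
      (z + 1) * binomialConvolution z (m + 1) 0 0 - z * binomialConvolution z m 0 0 := by
  simp only [binomialConvolution, Nat.choose_zero_right, Nat.cast_one, one_mul, sum_range_succ]
  ring

theorem binomialConvolution_add_two_succ (z : R) (m s : ℕ) :
    binomialConvolution z (m + 2) (s + 1) (s + 1) =
      (z + 1) * binomialConvolution z (m + 1) (s + 1) (s + 1) + binomialConvolution z (m + 2) s s
        - z * binomialConvolution z m (s + 1) (s + 1) := by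
  linear_combination binomialConvolution_succ_sub z (m + 1) s (s + 1)
    - z * binomialConvolution_succ_sub z m s (s + 1)
    + binomialConvolution_succ_sub_mul z (m + 1) s s

theorem sum_choose_mul_choose_eq_binomialConvolution (z : R) (N s : ℕ) :
    ∑ j ∈ range N, ((N + s - 1 - j).choose s : R) * ((s + j).choose j : R) * z ^ j =
      binomialConvolution z N s s := by
  refine sum_congr rfl fun j hj => ?_
  rw [show N + s - 1 - j = N - 1 - j + s by have := mem_range.mp hj; omega, add_comm s j,
    Nat.choose_symm_add]

end BinomialConvolution

namespace Polynomial

theorem iterate_derivative_natDegree_self {R : Type*} [CommSemiring R] (p : R[X]) :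
    derivative^[p.natDegree] p = C (p.natDegree ! * p.leadingCoeff) := by
  have hdeg : (derivative^[p.natDegree] p).natDegree ≤ 0 :=
    (natDegree_iterate_derivative p _).trans (by omega)
  rw [eq_C_of_natDegree_le_zero hdeg, coeff_iterate_derivative, zero_add,
    Nat.descFactorial_self, nsmul_eq_mul, leadingCoeff]

namespace Chebyshev

variable {R : Type*} [CommRing R]

theorem natDegree_U_natCast_le (n : ℕ) : (U R n).natDegree ≤ n := by
  rw [← map_U (Int.castRingHom R)]
  exact natDegree_map_le.trans (natDegree_U_natCast ℤ n).le

theorem iterate_derivative_U_natCast_self (n : ℕ) :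
    derivative^[n] (U R n) = Polynomial.C ((n ! : R) * 2 ^ n) := by
  have h := iterate_derivative_natDegree_self (U ℤ n)
  rw [natDegree_U_natCast, leadingCoeff_U_natCast] at h
  rw [← map_U (Int.castRingHom R), iterate_derivative_map, h, Polynomial.map_C]
  simp

theorem iterate_derivative_U_sub_one (s : ℕ) : derivative^[s] (U R (s - 1)) = 0 := by
  cases s with
  | zero => simp
  | succ s =>
    simpa using iterate_derivative_eq_zero
      ((natDegree_U_natCast_le (R := R) s).trans_lt s.lt_succ_self)

theorem iterate_derivative_U_add_two (n : ℤ) (s : ℕ) :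
    derivative^[s] (U R (n + 2)) =
      2 * X * derivative^[s] (U R (n + 1)) + (2 * s : R[X]) * derivative^[s - 1] (U R (n + 1))
        - derivative^[s] (U R n) := by
  have h2X : 2 * X * U R (n + 1) = Polynomial.C (2 : R) * U R (n + 1) * X := by
    rw [C_ofNat]; ring
  rw [U_add_two, iterate_derivative_sub, h2X, iterate_derivative_mul_X, iterate_derivative_C_mul,
    iterate_derivative_C_mul]
  simp only [C_ofNat, nsmul_eq_mul]
  ring

theorem eval_iterate_derivative_U_add_two {x w : R} (hxw : 2 * x * w = w ^ 2 + 1) (n : ℤ)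
    (s m : ℕ) :
    w ^ (m + 2) * (derivative^[s] (U R (n + 2))).eval x =
      (w ^ 2 + 1) * (w ^ (m + 1) * (derivative^[s] (U R (n + 1))).eval x)
      + 2 * s * (w ^ (m + 2) * (derivative^[s - 1] (U R (n + 1))).eval x)
      - w ^ 2 * (w ^ m * (derivative^[s] (U R n)).eval x) := by
  rw [iterate_derivative_U_add_two]
  simp only [eval_sub, eval_add, eval_mul, eval_ofNat, eval_X, eval_natCast]
  linear_combination w ^ (m + 1) * (derivative^[s] (U R (n + 1))).eval x * hxw

theorem pow_mul_eval_iterate_derivative_U {x w : R} (hxw : 2 * x * w = w ^ 2 + 1) (s N : ℕ) :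
    w ^ N * (derivative^[s] (U R (N + s - 1))).eval x =
      2 ^ s * s ! * w * binomialConvolution (w ^ 2) N s s := by
  induction s generalizing N with
  | zero =>
    induction N using Nat.twoStepInduction with
    | zero => simp [binomialConvolution]
    | one => simp [binomialConvolution]
    | more m ih0 ih1 =>
      have h := eval_iterate_derivative_U_add_two hxw (m - 1) 0 m
      rw [show ((m + 2 : ℕ) : ℤ) + (0 : ℕ) - 1 = m - 1 + 2 by omega]
      rw [show ((m + 1 : ℕ) : ℤ) + (0 : ℕ) - 1 = m - 1 + 1 by omega] at ih1
      rw [show (m : ℤ) + (0 : ℕ) - 1 = m - 1 by omega] at ih0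
      linear_combination h + (w ^ 2 + 1) * ih1 - w ^ 2 * ih0 -
        w * binomialConvolution_add_two_zero (w ^ 2) m
  | succ s ihs =>
    induction N using Nat.twoStepInduction with
    | zero =>
      simp only [Nat.cast_zero, zero_add, iterate_derivative_U_sub_one]
      simp [binomialConvolution]
    | one =>
      simp only [Nat.cast_one, add_sub_cancel_left, iterate_derivative_U_natCast_self]
      simp [binomialConvolution]
      ring
    | more m ih0 ih1 =>
      have h := eval_iterate_derivative_U_add_two hxw (m + s) (s + 1) m
      have hmid := ihs (m + 2)
      rw [show ((m + 2 : ℕ) : ℤ) + (s + 1 : ℕ) - 1 = m + s + 2 by omega]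
      rw [show ((m + 1 : ℕ) : ℤ) + (s + 1 : ℕ) - 1 = m + s + 1 by omega] at ih1
      rw [show (m : ℤ) + (s + 1 : ℕ) - 1 = m + s by omega] at ih0
      rw [show ((m + 2 : ℕ) : ℤ) + s - 1 = m + s + 1 by omega] at hmid
      rw [Nat.add_sub_cancel] at h
      rw [Nat.factorial_succ] at ih0 ih1 ⊢
      push_cast at *
      linear_combination h + (w ^ 2 + 1) * ih1 - w ^ 2 * ih0 + 2 * (s + 1) * hmid -
        2 ^ (s + 1) * (s + 1) * s ! * w * binomialConvolution_add_two_succ (w ^ 2) m s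

end Chebyshev

end Polynomial

theorem stmt18_general (N s : ℕ) (z w : ℂ) (hz : z ≠ 0) (hw : w ^ 2 = z) :
    (1 / (2 ^ s * s.factorial : ℂ)) *
        (Polynomial.derivative^[s] (Polynomial.Chebyshev.U ℂ (N + s - 1))).eval
          ((w + w⁻¹) / 2) =
      w ^ (-((N : ℤ) - 1)) *
        ∑ j ∈ Finset.range N,
          ((N + s - 1 - j).choose s : ℂ) * ((s + j).choose j : ℂ) * z ^ j := by
  subst hw
  have hw0 : w ≠ 0 := by rintro rfl; simp at hz
  have hxw : 2 * ((w + w⁻¹) / 2) * w = w ^ 2 + 1 := by field_simp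
  have hfac : (s ! : ℂ) ≠ 0 := mod_cast s.factorial_ne_zero
  have key := Chebyshev.pow_mul_eval_iterate_derivative_U hxw s N
  generalize (w + w⁻¹) / 2 = x at key ⊢
  rw [sum_choose_mul_choose_eq_binomialConvolution, zpow_neg, zpow_sub_one₀ hw0, zpow_natCast]
  field_simp
  linear_combination key

theorem stmt18 (N s : ℕ) (hN : 1 ≤ N) (z w : ℂ) (hz : z ≠ 0) (hw : w ^ 2 = z) :
    (1 / (2 ^ s * s.factorial : ℂ)) *
        (Polynomial.derivative^[s] (Polynomial.Chebyshev.U ℂ (N + s - 1))).eval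
          ((w + w⁻¹) / 2) =
      w ^ (-((N : ℤ) - 1)) *
        ∑ j ∈ Finset.range N,
          ((N + s - 1 - j).choose s : ℂ) * ((s + j).choose j : ℂ) * z ^ j :=
  stmt18_general N s z w hz hw
end
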